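/- arXiv:1407.2399 — 7 statements merged into one kernel-verified Lean document; each statement's English description precedes it below -/
import Mathlib

section
/- Let A ∈ ℝ²ˣ² be of the form A = [[-a₁₂, a₁₂],[a₂₁, -a₂₁]] with a₁₂, a₂₁ ≥ 0 (a 2×2 Metzler matrix with zero row sums), and let P = I - (1/2)·1₂1₂'. Then PA + A'P = 2·tr(A)·P. Hence for x: ℝ → ℝ² solving ẋ = Ax, the function V(x) = x'Px satisfies dV/dt = 2·tr(A)·V. -/
/-!
With `P = I - ½·𝟙𝟙ᵀ` and `A` of zero row sums, a direct computation in dimension two gives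
`P A = tr(A) P`; since `P` is symmetric, transposing gives `Aᵀ P = tr(A) P` as well. Along a solution
of `ẋ = A x` the derivative of `xᵀ P x` is `xᵀ (P A + Aᵀ P) x`, which is therefore `2 tr(A) xᵀ P x`.
-/

open Matrix

section

variable {n : Type*} [Fintype n]

theorem HasDerivAt.dotProduct {x y : ℝ → n → ℝ} {x' y' : n → ℝ} {t : ℝ}
    (hx : HasDerivAt x x' t) (hy : HasDerivAt y y' t) :
    HasDerivAt (fun s => x s ⬝ᵥ y s) (x' ⬝ᵥ y t + x t ⬝ᵥ y') t := by
  simp only [_root_.dotProduct, ← Finset.sum_add_distrib]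
  exact HasDerivAt.fun_sum fun i _ => (hasDerivAt_pi.mp hx i).mul (hasDerivAt_pi.mp hy i)

theorem HasDerivAt.mulVec {x : ℝ → n → ℝ} {x' : n → ℝ} {t : ℝ} (M : Matrix n n ℝ)
    (hx : HasDerivAt x x' t) : HasDerivAt (fun s => M *ᵥ x s) (M *ᵥ x') t :=
  (LinearMap.toContinuousLinearMap (mulVecLin M)).hasFDerivAt.comp_hasDerivAt t hx

theorem hasDerivAt_dotProduct_mulVec_of_hasDerivAt_mulVec {A : Matrix n n ℝ} (P : Matrix n n ℝ)
    {x : ℝ → n → ℝ} {t : ℝ} (hx : HasDerivAt x (A *ᵥ x t) t) :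
    HasDerivAt (fun s => x s ⬝ᵥ P *ᵥ x s) (x t ⬝ᵥ (P * A + Aᵀ * P) *ᵥ x t) t := by
  convert hx.dotProduct (hx.mulVec P) using 1
  rw [add_mulVec, dotProduct_add, add_comm, ← mulVec_mulVec, ← mulVec_mulVec,
    dotProduct_mulVec, vecMul_transpose]

theorem mul_add_transpose_mul_eq_smul {A P : Matrix n n ℝ} {c : ℝ} (hP : Pᵀ = P)
    (hPA : P * A = c • P) : P * A + Aᵀ * P = (2 * c) • P := by
  have hAP : Aᵀ * P = c • P := by rw [← hP, ← transpose_mul, hPA, transpose_smul]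
  rw [hPA, hAP, two_mul, add_smul]

end

theorem centering_mul_eq_trace_smul_of_rowSum_eq_zero {A : Matrix (Fin 2) (Fin 2) ℝ}
    (hA : ∀ i, ∑ j, A i j = 0) :
    (1 - (2 : ℝ)⁻¹ • of (fun _ _ => (1 : ℝ))) * A =
      A.trace • (1 - (2 : ℝ)⁻¹ • of (fun _ _ => (1 : ℝ))) := by
  have h0 := hA 0
  have h1 := hA 1
  simp only [Fin.sum_univ_two] at h0 h1
  ext i j
  fin_cases i <;> fin_cases j <;>
    simp [mul_apply, Fin.sum_univ_two, trace_fin_two, one_apply] <;> linarith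

theorem stmt_3_general (a12 a21 : ℝ) :
    let A : Matrix (Fin 2) (Fin 2) ℝ := !![-a12, a12; a21, -a21]
    let P : Matrix (Fin 2) (Fin 2) ℝ :=
      1 - (2 : ℝ)⁻¹ • Matrix.of (fun _ _ => (1 : ℝ))
    (P * A + Aᵀ * P = (2 * A.trace) • P) ∧
      ∀ (x : ℝ → Fin 2 → ℝ), (∀ s : ℝ, HasDerivAt x (A.mulVec (x s)) s) →
        ∀ t : ℝ,
          HasDerivAt (fun s => (x s) ⬝ᵥ P.mulVec (x s))
            (2 * A.trace * ((x t) ⬝ᵥ P.mulVec (x t))) t := by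
  intro A P
  have hA : ∀ i, ∑ j, A i j = 0 := by
    intro i
    fin_cases i <;> simp [A, Fin.sum_univ_two]
  have hP : Pᵀ = P := by
    simp only [P, transpose_sub, transpose_one, transpose_smul]
    rfl
  have hLyap : P * A + Aᵀ * P = (2 * A.trace) • P :=
    mul_add_transpose_mul_eq_smul hP (centering_mul_eq_trace_smul_of_rowSum_eq_zero hA)
  refine ⟨hLyap, fun x hx t => ?_⟩
  have hV := hasDerivAt_dotProduct_mulVec_of_hasDerivAt_mulVec P (hx t)
  rwa [hLyap, smul_mulVec, dotProduct_smul, smul_eq_mul] at hV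

theorem stmt_3 (a12 a21 : ℝ) (h12 : 0 ≤ a12) (h21 : 0 ≤ a21) :
    let A : Matrix (Fin 2) (Fin 2) ℝ := !![-a12, a12; a21, -a21]
    let P : Matrix (Fin 2) (Fin 2) ℝ :=
      1 - (2 : ℝ)⁻¹ • Matrix.of (fun _ _ => (1 : ℝ))
    (P * A + Aᵀ * P = (2 * A.trace) • P) ∧
      ∀ (x : ℝ → Fin 2 → ℝ), (∀ s : ℝ, HasDerivAt x (A.mulVec (x s)) s) →
        ∀ t : ℝ,
          HasDerivAt (fun s => (x s) ⬝ᵥ P.mulVec (x s))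
            (2 * A.trace * ((x t) ⬝ᵥ P.mulVec (x t))) t :=
  stmt_3_general a12 a21
end

section
/- Let A ∈ ℝⁿˣⁿ be Metzler with zero row sums. Then along any solution x of ẋ = Ax, the function Ṽ(x) = maxᵢ xᵢ - minᵢ xᵢ is non-increasing. -/
/-!
A solution satisfies `x t = exp ((t - s) • A) *ᵥ x s`. Since `A` is Metzler, adding a large
multiple of the identity makes it entrywise nonnegative, so `exp (τ • A)` is entrywise nonnegative
for `τ ≥ 0`; since `A *ᵥ 1 = 0`, it fixes `1`. Hence `exp ((t - s) • A)` is row-stochastic, each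
`x t i` is a convex combination of the `x s j`, and the spread `max - min` cannot grow.
-/

open Matrix NormedSpace

-- `exp` on matrices needs a Banach algebra structure; any submultiplicative norm will do.
attribute [local instance] Matrix.linftyOpNormedRing Matrix.linftyOpNormedAlgebra

namespace Matrix

variable {ι : Type*} [Fintype ι] [DecidableEq ι]

theorem exp_apply_nonneg {M : Matrix ι ι ℝ} (hM : ∀ i j, 0 ≤ M i j) (i j : ι) :
    0 ≤ exp M i j := by
  have h := Pi.hasSum.1 (Pi.hasSum.1 (exp_series_hasSum_exp' (𝕂 := ℝ) M) i) j
  exact h.nonneg fun k => mul_nonneg (by positivity) (pow_apply_nonneg hM k i j)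

theorem exp_apply_nonneg_of_offDiag_nonneg {M : Matrix ι ι ℝ}
    (hM : ∀ i j, i ≠ j → 0 ≤ M i j) (i j : ι) : 0 ≤ exp M i j := by
  set c : ℝ := ∑ k, |M k k|
  have hshift : ∀ i j, 0 ≤ (M + algebraMap ℝ _ c) i j := by
    intro i j
    rcases eq_or_ne i j with rfl | hij
    · have : |M i i| ≤ c :=
        Finset.single_le_sum (fun k _ => abs_nonneg (M k k)) (Finset.mem_univ i)
      simp only [add_apply, algebraMap_matrix_apply, if_true, Algebra.algebraMap_self,
        RingHom.id_apply]
      linarith [neg_abs_le (M i i)]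
    · simpa [algebraMap_matrix_apply, hij] using hM i j hij
  have hsplit : M = algebraMap ℝ _ (-c) + (M + algebraMap ℝ _ c) := by
    simp only [map_neg]; abel
  have hscalar : exp (algebraMap ℝ (Matrix ι ι ℝ) (-c)) = algebraMap ℝ _ (Real.exp (-c)) := by
    rw [Real.exp_eq_exp_ℝ]; exact (algebraMap_exp_comm (-c)).symm
  rw [hsplit, exp_add_of_commute _ _ (Algebra.commute_algebraMap_left _ _), hscalar,
    ← Algebra.smul_def, smul_apply, smul_eq_mul]
  exact mul_nonneg (Real.exp_nonneg _) (exp_apply_nonneg hshift i j)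

theorem hasDerivAt_exp_smul_mulVec (A : Matrix ι ι ℝ) (v : ι → ℝ) (t : ℝ) :
    HasDerivAt (fun u : ℝ => exp (u • A) *ᵥ v) (A *ᵥ (exp (t • A) *ᵥ v)) t := by
  let evalAt : Matrix ι ι ℝ →L[ℝ] ι → ℝ :=
    LinearMap.toContinuousLinearMap ((mulVecBilin ℝ ℝ).flip v)
  rw [mulVec_mulVec]
  exact evalAt.hasFDerivAt.comp_hasDerivAt t (hasDerivAt_exp_smul_const' (𝕂 := ℝ) A t)

theorem eq_exp_smul_mulVec_of_hasDerivAt {A : Matrix ι ι ℝ} {x : ℝ → ι → ℝ}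
    (hx : ∀ t, HasDerivAt x (A *ᵥ x t) t) (s t : ℝ) :
    x t = exp ((t - s) • A) *ᵥ x s := by
  have hsol : ∀ t, HasDerivAt (fun u => exp ((u - s) • A) *ᵥ x s)
      (A *ᵥ (exp ((t - s) • A) *ᵥ x s)) t := fun t => by
    simpa using (hasDerivAt_exp_smul_mulVec A (x s) (t - s)).comp_sub_const t s
  have hlip : LipschitzWith ‖(mulVecLin A).toContinuousLinearMap‖₊ (A *ᵥ ·) :=
    (mulVecLin A).toContinuousLinearMap.lipschitz
  refine congrFun (ODE_solution_unique_univ (v := fun _ => (A *ᵥ ·)) (s := fun _ => Set.univ)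
    (t₀ := s) (fun _ => hlip.lipschitzOnWith) (fun t => ⟨hx t, trivial⟩)
    (fun t => ⟨hsol t, trivial⟩) ?_) t
  simp

theorem exp_smul_mulVec_eq_self {A : Matrix ι ι ℝ} {v : ι → ℝ} (hv : A *ᵥ v = 0) (τ : ℝ) :
    exp (τ • A) *ᵥ v = v := by
  have hconst : ∀ t : ℝ, HasDerivAt (fun _ : ℝ => v) (A *ᵥ v) t := fun t => by
    simpa [hv] using hasDerivAt_const t v
  simpa using (eq_exp_smul_mulVec_of_hasDerivAt hconst 0 τ).symm

theorem exp_smul_mem_rowStochastic {A : Matrix ι ι ℝ} (hA : ∀ i j, i ≠ j → 0 ≤ A i j)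
    (hA1 : A *ᵥ 1 = 0) {τ : ℝ} (hτ : 0 ≤ τ) : exp (τ • A) ∈ rowStochastic ℝ ι :=
  mem_rowStochastic.2 ⟨exp_apply_nonneg_of_offDiag_nonneg fun i j hij =>
    smul_nonneg hτ (hA i j hij), exp_smul_mulVec_eq_self hA1 τ⟩

theorem mulVec_apply_le_of_mem_rowStochastic {P : Matrix ι ι ℝ} (hP : P ∈ rowStochastic ℝ ι)
    {v : ι → ℝ} {c : ℝ} (hv : ∀ j, v j ≤ c) (i : ι) : (P *ᵥ v) i ≤ c :=
  calc (P *ᵥ v) i = ∑ j, P i j * v j := rfl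
    _ ≤ ∑ j, P i j * c :=
      Finset.sum_le_sum fun j _ =>
        mul_le_mul_of_nonneg_left (hv j) (nonneg_of_mem_rowStochastic hP)
    _ = c := by rw [← Finset.sum_mul, sum_row_of_mem_rowStochastic hP, one_mul]

theorem le_mulVec_apply_of_mem_rowStochastic {P : Matrix ι ι ℝ} (hP : P ∈ rowStochastic ℝ ι)
    {v : ι → ℝ} {c : ℝ} (hv : ∀ j, c ≤ v j) (i : ι) : c ≤ (P *ᵥ v) i := by
  have := mulVec_apply_le_of_mem_rowStochastic hP (v := -v) (c := -c)
    (fun j => neg_le_neg (hv j)) i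
  rwa [mulVec_neg, Pi.neg_apply, neg_le_neg_iff] at this

theorem iSup_sub_iInf_mulVec_le_of_mem_rowStochastic [Nonempty ι] {P : Matrix ι ι ℝ}
    (hP : P ∈ rowStochastic ℝ ι) (v : ι → ℝ) :
    (⨆ i, (P *ᵥ v) i) - (⨅ i, (P *ᵥ v) i) ≤ (⨆ i, v i) - (⨅ i, v i) := by
  have hsup : (⨆ i, (P *ᵥ v) i) ≤ ⨆ i, v i := ciSup_le <|
    mulVec_apply_le_of_mem_rowStochastic hP fun j => le_ciSup (Finite.bddAbove_range v) j
  have hinf : (⨅ i, v i) ≤ ⨅ i, (P *ᵥ v) i := le_ciInf <|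
    le_mulVec_apply_of_mem_rowStochastic hP fun j => ciInf_le (Finite.bddBelow_range v) j
  linarith

end Matrix

theorem stmt_7 (n : ℕ) (hn : 1 ≤ n) (A : Matrix (Fin n) (Fin n) ℝ)
    (hMetzler : ∀ i j, i ≠ j → 0 ≤ A i j)
    (hrows : A.mulVec (fun _ => 1) = 0)
    (x : ℝ → Fin n → ℝ) (hx : ∀ t : ℝ, HasDerivAt x (A.mulVec (x t)) t) :
    ∀ s t : ℝ, s ≤ t →
      (⨆ i, x t i) - (⨅ i, x t i) ≤ (⨆ i, x s i) - (⨅ i, x s i) := by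
  intro s t hst
  have : Nonempty (Fin n) := Fin.pos_iff_nonempty.1 hn
  rw [eq_exp_smul_mulVec_of_hasDerivAt hx s t]
  exact iSup_sub_iInf_mulVec_le_of_mem_rowStochastic
    (exp_smul_mem_rowStochastic hMetzler hrows (sub_nonneg.2 hst)) (x s)
end

section
/- Let Ā be the 2×2 reduced matrix of a 3×3 Metzler zero-row-sum matrix A with off-diagonal entries a_{kl} ≥ 0, i.e., Ā = [[-(a₁₂+a₁₃+a₂₁), a₂₃-a₁₃],[a₂₁-a₃₁, -(a₂₃+a₃₁+a₃₂)]]. Then tr(Ā) = -(a₁₂+a₁₃+a₂₁+a₂₃+a₃₁+a₃₂) ≤ 0, with equality iff A = 0, and det(Ā) = (a₂₁+a₂₃)(a₁₃+a₃₁) + (a₁₃+a₂₁)a₃₂ + a₁₂(a₂₃+a₃₁+a₃₂) ≥ 0. -/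
open Matrix

theorem stmt_13 (a12 a13 a21 a23 a31 a32 : ℝ)
    (h12 : 0 ≤ a12) (h13 : 0 ≤ a13) (h21 : 0 ≤ a21)
    (h23 : 0 ≤ a23) (h31 : 0 ≤ a31) (h32 : 0 ≤ a32) :
    let A : Matrix (Fin 3) (Fin 3) ℝ :=
      !![-a12 - a13, a12, a13; a21, -a21 - a23, a23; a31, a32, -a31 - a32]
    let Abar : Matrix (Fin 2) (Fin 2) ℝ :=
      !![-(a12 + a13 + a21), a23 - a13; a21 - a31, -(a23 + a31 + a32)]
    Abar.trace = -(a12 + a13 + a21 + a23 + a31 + a32) ∧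
      Abar.trace ≤ 0 ∧ (Abar.trace = 0 ↔ A = 0) ∧
      Abar.det = (a21 + a23) * (a13 + a31) + (a13 + a21) * a32
          + a12 * (a23 + a31 + a32) ∧
      0 ≤ Abar.det := by
  intro A Abar
  have htr : Abar.trace = -(a12 + a13 + a21 + a23 + a31 + a32) := by
    simp [Abar, Matrix.trace_fin_two]; ring
  have hdet : Abar.det = (a21 + a23) * (a13 + a31) + (a13 + a21) * a32
      + a12 * (a23 + a31 + a32) := by
    simp [Abar, Matrix.det_fin_two]; ring
  refine ⟨htr, ?_, ?_, hdet, ?_⟩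
  · rw [htr]; nlinarith
  · rw [htr]
    constructor
    · intro h
      have h12' : a12 = 0 := by nlinarith
      have h13' : a13 = 0 := by nlinarith
      have h21' : a21 = 0 := by nlinarith
      have h23' : a23 = 0 := by nlinarith
      have h31' : a31 = 0 := by nlinarith
      have h32' : a32 = 0 := by nlinarith
      ext i j; fin_cases i <;> fin_cases j <;>
        simp [A, h12', h13', h21', h23', h31', h32', Matrix.vecHead, Matrix.vecTail]
    · intro h
      have h0 := congrFun (congrFun h 0) 1
      have h1 := congrFun (congrFun h 0) 2
      have h2 := congrFun (congrFun h 1) 0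
      have h3 := congrFun (congrFun h 1) 2
      have h4 := congrFun (congrFun h 2) 0
      have h5 := congrFun (congrFun h 2) 1
      simp [A] at h0 h1 h2 h3 h4 h5
      rw [h0, h1, h2, h3, h4, h5]; ring
  · rw [hdet]; nlinarith
end

section
/- Let Ā₁, Ā₂ be the 2×2 reduced matrices of two 3×3 Metzler zero-row-sum matrices A₁, A₂ (with nonnegative off-diagonal entries a^i_{kl}). Then tr(Ā₂Ā₁) ≥ 0. In particular, Ā₂Ā₁ cannot have two real negative eigenvalues. -/
open Matrix Polynomial

theorem stmt_14 (a112 a113 a121 a123 a131 a132 a212 a213 a221 a223 a231 a232 : ℝ)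
    (h1 : 0 ≤ a112) (h2 : 0 ≤ a113) (h3 : 0 ≤ a121) (h4 : 0 ≤ a123)
    (h5 : 0 ≤ a131) (h6 : 0 ≤ a132)
    (h7 : 0 ≤ a212) (h8 : 0 ≤ a213) (h9 : 0 ≤ a221) (h10 : 0 ≤ a223)
    (h11 : 0 ≤ a231) (h12 : 0 ≤ a232) :
    let A1bar : Matrix (Fin 2) (Fin 2) ℝ :=
      !![-(a112 + a113 + a121), a123 - a113; a121 - a131, -(a123 + a131 + a132)]
    let A2bar : Matrix (Fin 2) (Fin 2) ℝ :=
      !![-(a212 + a213 + a221), a223 - a213; a221 - a231, -(a223 + a231 + a232)]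
    0 ≤ (A2bar * A1bar).trace ∧
      ¬ ∃ μ ν : ℝ, μ < 0 ∧ ν < 0 ∧
        (A2bar * A1bar).charpoly = (X - C μ) * (X - C ν) := by
  intro A1bar A2bar
  have htr : 0 ≤ (A2bar * A1bar).trace := by
    simp [A1bar, A2bar, Matrix.mul_fin_two, Matrix.trace_fin_two]
    nlinarith [mul_nonneg h2 h10, mul_nonneg h8 h4, mul_nonneg h3 h9,
      mul_nonneg h5 h11, mul_nonneg h1 h7, mul_nonneg h1 h8, mul_nonneg h1 h9,
      mul_nonneg h2 h7, mul_nonneg h2 h9, mul_nonneg h3 h7, mul_nonneg h3 h8,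
      mul_nonneg h4 h10, mul_nonneg h4 h11, mul_nonneg h4 h12,
      mul_nonneg h5 h10, mul_nonneg h5 h12, mul_nonneg h6 h10, mul_nonneg h6 h11,
      mul_nonneg h6 h12, mul_nonneg h2 h11, mul_nonneg h3 h10, mul_nonneg h5 h8,
      mul_nonneg h4 h9]
  refine ⟨htr, ?_⟩
  rintro ⟨μ, ν, hμ, hν, hcp⟩
  have hc : (A2bar * A1bar).trace = -((A2bar * A1bar).charpoly.coeff (2 - 1)) := by
    exact Matrix.trace_eq_neg_charpoly_coeff _
  rw [hcp] at hc
  have hcoeff : ((X - C μ) * (X - C ν) : ℝ[X]).coeff 1 = -(μ + ν) := by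
    have hexp : ((X - C μ) * (X - C ν) : ℝ[X])
        = X ^ 2 - (C μ + C ν) * X + C μ * C ν := by ring
    rw [hexp, ← C_mul, ← C_add]
    simp [coeff_add, coeff_sub, coeff_X_pow, coeff_C_mul, coeff_C]
  rw [show (2 - 1 : ℕ) = 1 from rfl, hcoeff] at hc
  rw [hc] at htr
  linarith
end

section
/- Let Ā₁, Ā₂ ∈ ℝ²ˣ² satisfy: tr(Āᵢ) < 0, det(Āᵢ) > 0 for i = 1,2, det(αĀ₁ + (1-α)Ā₂) > 0 for all α ∈ [0,1], and tr(Ā₂Ā₁) ≥ 0. Then for all α ∈ [0,1], the matrix αĀ₁ + (1-α)Ā₂⁻¹ has negative trace and positive determinant, hence is Hurwitz. -/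
open Matrix

theorem stmt_15 (A1 A2 : Matrix (Fin 2) (Fin 2) ℝ)
    (ht1 : A1.trace < 0) (ht2 : A2.trace < 0)
    (hd1 : 0 < A1.det) (hd2 : 0 < A2.det)
    (hconv : ∀ α ∈ Set.Icc (0 : ℝ) 1, 0 < (α • A1 + (1 - α) • A2).det)
    (htr : 0 ≤ (A2 * A1).trace) :
    ∀ α ∈ Set.Icc (0 : ℝ) 1,
      (α • A1 + (1 - α) • A2⁻¹).trace < 0 ∧
        0 < (α • A1 + (1 - α) • A2⁻¹).det := by
  intro α hα
  obtain ⟨h0, h1⟩ := hα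
  have hdne : A2.det ≠ 0 := ne_of_gt hd2
  have hinv : A2⁻¹ = (A2.det)⁻¹ • !![A2 1 1, -A2 0 1; -A2 1 0, A2 0 0] := by
    rw [Matrix.inv_def, Matrix.adjugate_fin_two, Ring.inverse_eq_inv']
  have hd2' : A2 0 0 * A2 1 1 - A2 0 1 * A2 1 0 > 0 := by
    have := hd2; rw [Matrix.det_fin_two] at this; linarith
  have htr' : 0 ≤ (A2 0 0 * A1 0 0 + A2 0 1 * A1 1 0) + (A2 1 0 * A1 0 1 + A2 1 1 * A1 1 1) := by
    have := htr
    simp [Matrix.trace_fin_two, Matrix.mul_apply, Fin.sum_univ_two] at this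
    linarith
  have ht1' : A1 0 0 + A1 1 1 < 0 := by
    have := ht1; rw [Matrix.trace_fin_two] at this; linarith
  have ht2' : A2 0 0 + A2 1 1 < 0 := by
    have := ht2; rw [Matrix.trace_fin_two] at this; linarith
  have hd1' : 0 < A1 0 0 * A1 1 1 - A1 0 1 * A1 1 0 := by
    have := hd1; rw [Matrix.det_fin_two] at this; linarith
  rw [hinv]
  constructor
  · rw [Matrix.trace_fin_two]
    simp only [Matrix.add_apply, Matrix.smul_apply, Matrix.of_apply, Matrix.cons_val',
      Matrix.cons_val_zero, Matrix.cons_val_one, Matrix.head_cons, Matrix.head_fin_const,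
      Matrix.empty_val', Matrix.cons_val_fin_one, smul_eq_mul]
    have key : (A2.det)⁻¹ * (A2 1 1 + A2 0 0) < 0 := by
      apply mul_neg_of_pos_of_neg (inv_pos.mpr hd2)
      linarith
    have t1 : α * (A1 0 0 + A1 1 1) ≤ 0 := mul_nonpos_of_nonneg_of_nonpos h0 (le_of_lt ht1')
    rcases eq_or_lt_of_le h1 with h1e | h1lt
    · have : α * (A1 0 0 + A1 1 1) < 0 := by rw [h1e]; linarith
      nlinarith
    · have t2 : (1 - α) * (A2.det⁻¹ * (A2 1 1 + A2 0 0)) < 0 :=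
        mul_neg_of_pos_of_neg (by linarith) key
      nlinarith
  · rw [Matrix.det_fin_two]
    simp only [Matrix.add_apply, Matrix.smul_apply, Matrix.of_apply, Matrix.cons_val',
      Matrix.cons_val_zero, Matrix.cons_val_one, Matrix.head_cons, Matrix.head_fin_const,
      Matrix.empty_val', Matrix.cons_val_fin_one, smul_eq_mul]
    set d := A2.det with hd
    have hdval : d = A2 0 0 * A2 1 1 - A2 0 1 * A2 1 0 := by
      rw [hd, Matrix.det_fin_two]
    have hdpos : 0 < d := hd2
    have expand : (α * A1 0 0 + (1 - α) * (d⁻¹ * A2 1 1)) * (α * A1 1 1 + (1 - α) * (d⁻¹ * A2 0 0)) -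
        (α * A1 0 1 + (1 - α) * (d⁻¹ * -A2 0 1)) * (α * A1 1 0 + (1 - α) * (d⁻¹ * -A2 1 0)) =
        α^2 * (A1 0 0 * A1 1 1 - A1 0 1 * A1 1 0) + (1-α)^2 * d⁻¹ * (d⁻¹ * d)
        + α * (1-α) * d⁻¹ * ((A2 0 0 * A1 0 0 + A2 0 1 * A1 1 0) + (A2 1 0 * A1 0 1 + A2 1 1 * A1 1 1)) := by
      rw [hdval]; ring
    rw [expand, inv_mul_cancel₀ hdne]
    have hinvpos : 0 < d⁻¹ := inv_pos.mpr hdpos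
    have cross : 0 ≤ α * (1 - α) * d⁻¹ * ((A2 0 0 * A1 0 0 + A2 0 1 * A1 1 0) + (A2 1 0 * A1 0 1 + A2 1 1 * A1 1 1)) :=
      mul_nonneg (mul_nonneg (mul_nonneg h0 (by linarith)) hinvpos.le) htr'
    have sq2 : 0 ≤ (1 - α)^2 * d⁻¹ * 1 :=
      mul_nonneg (mul_nonneg (sq_nonneg _) hinvpos.le) zero_le_one
    rcases eq_or_lt_of_le h0 with h0e | h0lt
    · rw [← h0e]; norm_num; linarith
    · have : 0 < α^2 * (A1 0 0 * A1 1 1 - A1 0 1 * A1 1 0) := mul_pos (pow_pos h0lt 2) hd1'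
      linarith
end

section
/- Let Ā₁, Ā₂ ∈ ℝ²ˣ² with det(Āᵢ) > 0 for i=1,2 and tr(Ā₂Ā₁) ≥ 0. Then det(αĀ₁ + (1-α)Ā₂⁻¹) ≠ 0 for all α ∈ [0,1]. (If it were zero for some α ∈ (0,1), then αĀ₂Ā₁v = -(1-α)v for some nonzero v, so Ā₂Ā₁ would have a negative real eigenvalue; since det(Ā₂Ā₁) > 0 it would have two negative eigenvalues, contradicting tr(Ā₂Ā₁) ≥ 0.) -/
open Matrix

lemma det_smul_add_smul_one (M : Matrix (Fin 2) (Fin 2) ℝ) (a b : ℝ) :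
    (a • M + b • (1 : Matrix (Fin 2) (Fin 2) ℝ)).det
      = a ^ 2 * M.det + a * b * M.trace + b ^ 2 := by
  simp [Matrix.det_fin_two, Matrix.trace_fin_two, Matrix.add_apply, Matrix.smul_apply,
    Matrix.one_apply]
  ring

theorem stmt_16 (A1 A2 : Matrix (Fin 2) (Fin 2) ℝ)
    (hd1 : 0 < A1.det) (hd2 : 0 < A2.det)
    (htr : 0 ≤ (A2 * A1).trace) :
    ∀ α ∈ Set.Icc (0 : ℝ) 1, (α • A1 + (1 - α) • A2⁻¹).det ≠ 0 := by
  intro α hα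
  obtain ⟨h0, h1⟩ := hα
  have hA2 : A2 * A2⁻¹ = 1 := Matrix.mul_nonsing_inv A2 (isUnit_iff_ne_zero.mpr hd2.ne')
  have key : A2.det * (α • A1 + (1 - α) • A2⁻¹).det
      = (α • (A2 * A1) + (1 - α) • (1 : Matrix (Fin 2) (Fin 2) ℝ)).det := by
    rw [← Matrix.det_mul]
    congr 1
    rw [Matrix.mul_add, Matrix.mul_smul, Matrix.mul_smul, hA2]
  have hdet : 0 < (α • (A2 * A1) + (1 - α) • (1 : Matrix (Fin 2) (Fin 2) ℝ)).det := by
    rw [det_smul_add_smul_one]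
    have hdM : 0 < (A2 * A1).det := by rw [Matrix.det_mul]; positivity
    rcases eq_or_lt_of_le h0 with h | h
    · simp [← h]
    · have : 0 < α ^ 2 * (A2 * A1).det := by positivity
      nlinarith [sq_nonneg (1 - α), mul_nonneg (mul_nonneg h0 (sub_nonneg.mpr h1)) htr]
  intro hzero
  rw [hzero, mul_zero] at key
  exact absurd key.symm hdet.ne'
end

section
/- For n = 2 and matrices Aᵢ = [[-a^i₁₂, a^i₁₂],[a^i₂₁, -a^i₂₁]] with a^i₁₂, a^i₂₁ ≥ 0, ordered so that tr(A₁) ≤ ... ≤ tr(A_r): for any measurable control u: [0,T] → ℝʳ with uᵢ(t) ≥ 0 and Σᵢuᵢ(t) = 1, the solution of ẋ = (Σᵢ uᵢAᵢ)x satisfies V(x(T)) = V(x₀)·exp(2Σᵢ tr(Aᵢ)∫₀ᵀ uᵢ(t)dt). Consequently, if tr(A₁) < tr(A₂), the constant control u ≡ e¹ (first standard basis vector) minimizes V(x(T)) over all admissible controls. -/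
/-!
On `ℝ²`, `V x = (x 0 - x 1)² / 2`. The rows of every `Aᵢ`, hence of `∑ uᵢ Aᵢ`, sum to zero, and
for such a 2 × 2 matrix the difference `w = x 0 - x 1` obeys the scalar equation
`ẇ = tr (∑ uᵢ Aᵢ) · w`. By uniqueness of solutions `w` vanishes either everywhere or nowhere,
and in the latter case integrating `(log w²)' = 2 tr (∑ uᵢ Aᵢ)` gives the formula for `V (x T)`.
Since `∑ᵢ ∫₀ᵀ uᵢ = T`, the exponent is at least `tr A₁ · T`, which is the exponent of the
constant control `e¹`.
-/

open Matrix MeasureTheory Set Real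

section ScalarLinearODE

variable {c w : ℝ → ℝ} {M : ℝ}

theorem eq_zero_of_hasDerivAt_mul_of_eq_zero (hc : ∀ t, |c t| ≤ M)
    (hw : ∀ t, HasDerivAt w (c t * w t) t) {t₀ : ℝ} (h₀ : w t₀ = 0) (t : ℝ) : w t = 0 := by
  have hlip : ∀ s, LipschitzWith M.toNNReal (fun y : ℝ => c s * y) := fun s =>
    LipschitzWith.of_dist_le' fun y z => by
      rw [dist_eq_norm, dist_eq_norm, ← mul_sub, norm_mul, Real.norm_eq_abs]
      exact mul_le_mul_of_nonneg_right (hc s) (norm_nonneg _)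
  have ht : t ∈ Ioo (min t t₀ - 1) (max t t₀ + 1) :=
    ⟨by linarith [min_le_left t t₀], by linarith [le_max_left t t₀]⟩
  have ht₀ : t₀ ∈ Ioo (min t t₀ - 1) (max t t₀ + 1) :=
    ⟨by linarith [min_le_right t t₀], by linarith [le_max_right t t₀]⟩
  exact ODE_solution_unique_of_mem_Ioo (s := fun _ => univ) (g := fun _ => 0)
    (fun s _ => (hlip s).lipschitzOnWith) ht₀ (fun s _ => ⟨hw s, mem_univ _⟩)
    (fun s _ => ⟨by simpa using hasDerivAt_const s (0 : ℝ), mem_univ _⟩) h₀ ht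

theorem sq_eq_sq_mul_exp_integral_of_hasDerivAt (hc : ∀ t, |c t| ≤ M) {a b : ℝ}
    (hci : IntervalIntegrable c volume a b) (hw : ∀ t, HasDerivAt w (c t * w t) t) :
    w b ^ 2 = w a ^ 2 * exp (2 * ∫ t in a..b, c t) := by
  by_cases hz : ∃ t, w t = 0
  · obtain ⟨t₀, h₀⟩ := hz
    simp [eq_zero_of_hasDerivAt_mul_of_eq_zero hc hw h₀]
  push Not at hz
  -- `c` is merely integrable, so `w · exp (-∫ c)` need not be differentiable; `log w²` is.
  have hpos : ∀ t, 0 < w t ^ 2 := fun t => by positivity [hz t]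
  have hlog : ∀ t, HasDerivAt (fun t => log (w t ^ 2)) (2 * c t) t := fun t => by
    convert ((hw t).fun_pow 2).log (hpos t).ne' using 1
    field_simp [hz t]
    ring
  have hftc := intervalIntegral.integral_eq_sub_of_hasDerivAt (fun t _ => hlog t) (hci.const_mul 2)
  rw [intervalIntegral.integral_const_mul] at hftc
  rw [hftc, exp_sub, exp_log (hpos b), exp_log (hpos a)]
  field_simp [hz a]

end ScalarLinearODE

theorem Matrix.mulVec_zero_sub_mulVec_one_of_mulVec_one_eq_zero {R : Type*} [CommRing R]
    {A : Matrix (Fin 2) (Fin 2) R} (hA : A *ᵥ 1 = 0) (y : Fin 2 → R) :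
    (A *ᵥ y) 0 - (A *ᵥ y) 1 = A.trace * (y 0 - y 1) := by
  have h₀ : A 0 0 + A 0 1 = 0 := by simpa [mulVec, dotProduct, Fin.sum_univ_two] using congrFun hA 0
  have h₁ : A 1 0 + A 1 1 = 0 := by simpa [mulVec, dotProduct, Fin.sum_univ_two] using congrFun hA 1
  simp only [mulVec, dotProduct, Fin.sum_univ_two, trace_fin_two]
  linear_combination y 1 * h₀ - y 0 * h₁

theorem dotProduct_one_sub_half_ones_mulVec (y : Fin 2 → ℝ) :
    y ⬝ᵥ ((1 - (2 : ℝ)⁻¹ • Matrix.of fun _ _ => (1 : ℝ)) *ᵥ y) = (y 0 - y 1) ^ 2 / 2 := by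
  simp [mulVec, dotProduct, Fin.sum_univ_two, one_apply]
  ring

theorem sq_sub_eq_of_hasDerivAt_mulVec {A : ℝ → Matrix (Fin 2) (Fin 2) ℝ} {x : ℝ → Fin 2 → ℝ}
    {K a b : ℝ} (hA : ∀ t, A t *ᵥ 1 = 0) (htr : ∀ t, |(A t).trace| ≤ K)
    (htr_int : IntervalIntegrable (fun t => (A t).trace) volume a b)
    (hx : ∀ t, HasDerivAt x (A t *ᵥ x t) t) :
    (x b 0 - x b 1) ^ 2 = (x a 0 - x a 1) ^ 2 * exp (2 * ∫ t in a..b, (A t).trace) := by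
  refine sq_eq_sq_mul_exp_integral_of_hasDerivAt (w := fun t => x t 0 - x t 1) htr htr_int
    fun t => ?_
  rw [← mulVec_zero_sub_mulVec_one_of_mulVec_one_eq_zero (hA t)]
  exact (hasDerivAt_pi.1 (hx t) 0).sub (hasDerivAt_pi.1 (hx t) 1)

structure IsAdmissibleControl {ι : Type*} [Fintype ι] (u : ℝ → ι → ℝ) : Prop where
  measurable : ∀ i, Measurable fun t => u t i
  nonneg : ∀ t i, 0 ≤ u t i
  sum_eq_one : ∀ t, ∑ i, u t i = 1

namespace IsAdmissibleControl

variable {ι : Type*} [Fintype ι] {u : ℝ → ι → ℝ}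

theorem single [DecidableEq ι] (i : ι) : IsAdmissibleControl fun _ => Pi.single i 1 where
  measurable _ := measurable_const
  nonneg _ j := by by_cases h : j = i <;> simp [h]
  sum_eq_one _ := by simp

variable (hu : IsAdmissibleControl u)
include hu

theorem le_one (t : ℝ) (i : ι) : u t i ≤ 1 :=
  hu.sum_eq_one t ▸ Finset.single_le_sum (fun j _ => hu.nonneg t j) (Finset.mem_univ i)

theorem intervalIntegrable (i : ι) (a b : ℝ) : IntervalIntegrable (fun t => u t i) volume a b :=
  (intervalIntegrable_const (c := (1 : ℝ))).mono_fun' (hu.measurable i).aestronglyMeasurable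
    (ae_of_all _ fun t => by simpa [abs_of_nonneg (hu.nonneg t i)] using hu.le_one t i)

theorem sum_integral (a b : ℝ) : ∑ i, ∫ t in a..b, u t i = b - a := by
  rw [← intervalIntegral.integral_finsetSum fun i _ => hu.intervalIntegrable i a b]
  simp [hu.sum_eq_one]

theorem abs_sum_mul_le (f : ι → ℝ) (t : ℝ) : |∑ i, u t i * f i| ≤ ∑ i, |f i| :=
  (Finset.abs_sum_le_sum_abs _ _).trans <| Finset.sum_le_sum fun i _ => by
    rw [abs_mul, abs_of_nonneg (hu.nonneg t i)]
    exact mul_le_of_le_one_left (abs_nonneg _) (hu.le_one t i)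

theorem mul_sub_le_sum_mul_integral {f : ι → ℝ} {m a b : ℝ} (hm : ∀ i, m ≤ f i) (hab : a ≤ b) :
    m * (b - a) ≤ ∑ i, f i * ∫ t in a..b, u t i := by
  rw [← hu.sum_integral, Finset.mul_sum]
  exact Finset.sum_le_sum fun i _ => mul_le_mul_of_nonneg_right (hm i)
    (intervalIntegral.integral_nonneg hab fun t _ => hu.nonneg t i)

theorem sq_sub_eq_of_hasDerivAt {A : ι → Matrix (Fin 2) (Fin 2) ℝ} (hA : ∀ i, A i *ᵥ 1 = 0)
    {x : ℝ → Fin 2 → ℝ} (hx : ∀ t, HasDerivAt x ((∑ i, u t i • A i) *ᵥ x t) t) (a b : ℝ) :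
    (x b 0 - x b 1) ^ 2 =
      (x a 0 - x a 1) ^ 2 * exp (2 * ∑ i, (A i).trace * ∫ t in a..b, u t i) := by
  have htr : ∀ t, (∑ i, u t i • A i).trace = ∑ i, u t i * (A i).trace := fun t => by
    simp [trace_sum, trace_smul]
  have hint : ∀ i, IntervalIntegrable (fun t => u t i * (A i).trace) volume a b :=
    fun i => (hu.intervalIntegrable i a b).mul_const _
  convert sq_sub_eq_of_hasDerivAt_mulVec (fun t => by simp [sum_mulVec, smul_mulVec, hA])
    (fun t => (htr t).symm ▸ hu.abs_sum_mul_le _ t) ?_ hx using 4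
  · simp only [htr]
    rw [intervalIntegral.integral_finsetSum fun i _ => hint i]
    simp [intervalIntegral.integral_mul_const, mul_comm]
  · simp only [htr]
    simpa only [← Finset.sum_fn] using IntervalIntegrable.sum Finset.univ fun i _ => hint i

end IsAdmissibleControl

theorem stmt_17 (r : ℕ) (hr : 2 ≤ r) (T : ℝ) (hT : 0 < T)
    (a12 a21 : Fin r → ℝ)
    (A : Fin r → Matrix (Fin 2) (Fin 2) ℝ)
    (hAdef : ∀ i, A i = !![-(a12 i), a12 i; a21 i, -(a21 i)])
    (hord : ∀ i j : Fin r, i ≤ j → (A i).trace ≤ (A j).trace)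
    (u : ℝ → Fin r → ℝ) (humeas : ∀ i, Measurable fun t => u t i)
    (hunn : ∀ t i, 0 ≤ u t i) (husum : ∀ t, ∑ i, u t i = 1)
    (x : ℝ → Fin 2 → ℝ)
    (hx : ∀ t : ℝ, HasDerivAt x ((∑ i, u t i • A i).mulVec (x t)) t) :
    let P : Matrix (Fin 2) (Fin 2) ℝ :=
      1 - (2 : ℝ)⁻¹ • Matrix.of (fun _ _ => (1 : ℝ))
    let V : (Fin 2 → ℝ) → ℝ := fun y => y ⬝ᵥ P.mulVec y
    V (x T) = V (x 0) *
        Real.exp (2 * ∑ i, (A i).trace * ∫ t in (0 : ℝ)..T, u t i) ∧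
      ((A ⟨0, by omega⟩).trace < (A ⟨1, by omega⟩).trace →
        ∀ y : ℝ → Fin 2 → ℝ,
          (∀ t : ℝ, HasDerivAt y ((A ⟨0, by omega⟩).mulVec (y t)) t) →
          y 0 = x 0 → V (y T) ≤ V (x T)) := by
  intro P V
  have hV : ∀ y, V y = (y 0 - y 1) ^ 2 / 2 := dotProduct_one_sub_half_ones_mulVec
  have hA : ∀ i, A i *ᵥ 1 = 0 := fun i => by
    ext j; fin_cases j <;> simp [hAdef, mulVec, dotProduct, Fin.sum_univ_two]
  have hu : IsAdmissibleControl u := ⟨humeas, hunn, husum⟩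
  have hxT := hu.sq_sub_eq_of_hasDerivAt hA hx 0 T
  refine ⟨by rw [hV, hV, hxT]; ring, fun _ y hy hy₀ => ?_⟩
  set i₀ : Fin r := ⟨0, by omega⟩
  have hyT := (IsAdmissibleControl.single i₀).sq_sub_eq_of_hasDerivAt hA (x := y)
    (by simpa [Pi.single_apply] using hy) 0 T
  have hexp := hu.mul_sub_le_sum_mul_integral (fun i => hord i₀ i (Nat.zero_le _)) hT.le
  simp only [Pi.single_apply, intervalIntegral.integral_const, smul_eq_mul, mul_ite, mul_one,
    mul_zero, Finset.sum_ite_eq', Finset.mem_univ, if_true, sub_zero] at hyT hexp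
  rw [hV, hV, hyT, hxT, hy₀]
  gcongr
end
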